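/- arXiv:1902.04890 — 3 statements merged into one kernel-verified Lean document; each statement's English description precedes it below -/
import Mathlib

section
/- Let δ' > 0 and 0 < p < 1 be reals, and let B1, B2 ≥ 1 be reals. Define z⁻(γ1, γ2) = p·log(1 + γ1·δ')/γ1 + (1−p)·log(1 + γ2·δ')/γ2 for reals γ1, γ2 > 0. Then for all reals γ1 ∈ [1, B1] and γ2 ∈ [1, B2], z⁻(γ1, γ2) ≤ z⁻(1, 1), with strict inequality unless γ1 = 1 and γ2 = 1. -/
private lemma key_lt {δ' γ : ℝ} (hδ' : 0 < δ') (hγ : 1 < γ) :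
    Real.log (1 + γ * δ') / γ < Real.log (1 + δ') := by
  have hγ0 : 0 < γ := lt_trans one_pos hγ
  rw [div_lt_iff₀ hγ0]
  have hb : (1 : ℝ) + γ * δ' < (1 + δ') ^ γ := by
    have := one_add_mul_self_lt_rpow_one_add (le_of_lt (neg_one_lt_zero.trans hδ')) (ne_of_gt hδ') hγ
    linarith [this]
  calc Real.log (1 + γ * δ') < Real.log ((1 + δ') ^ γ) :=
        Real.log_lt_log (by positivity) hb
    _ = γ * Real.log (1 + δ') := Real.log_rpow (by linarith) γ
    _ = Real.log (1 + δ') * γ := mul_comm _ _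

private lemma key_le {δ' γ : ℝ} (hδ' : 0 < δ') (hγ : 1 ≤ γ) :
    Real.log (1 + γ * δ') / γ ≤ Real.log (1 + δ') := by
  rcases eq_or_lt_of_le hγ with h | h
  · simp [← h]
  · exact (key_lt hδ' h).le

/-- High negative correlation case: the aggregate throughput
`z⁻ (γ1, γ2) = p log (1 + γ1 δ') / γ1 + (1 − p) log (1 + γ2 δ') / γ2`
is maximized over `[1, B1] × [1, B2]` at `γ1 = γ2 = 1`, strictly so at any other
feasible point. -/
theorem high_negative_correlation_optimal_thresholds
    (δ' p B1 B2 : ℝ) (hδ' : 0 < δ') (hp0 : 0 < p) (hp1 : p < 1)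
    (hB1 : 1 ≤ B1) (hB2 : 1 ≤ B2) :
    ∀ γ1 γ2 : ℝ, 1 ≤ γ1 → γ1 ≤ B1 → 1 ≤ γ2 → γ2 ≤ B2 →
      (p * Real.log (1 + γ1 * δ') / γ1 + (1 - p) * Real.log (1 + γ2 * δ') / γ2 ≤
        p * Real.log (1 + 1 * δ') / 1 + (1 - p) * Real.log (1 + 1 * δ') / 1) ∧
      (¬(γ1 = 1 ∧ γ2 = 1) →
        p * Real.log (1 + γ1 * δ') / γ1 + (1 - p) * Real.log (1 + γ2 * δ') / γ2 <
          p * Real.log (1 + 1 * δ') / 1 + (1 - p) * Real.log (1 + 1 * δ') / 1) := by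
  intro γ1 γ2 h1 _ h2 _
  have hq : 0 < 1 - p := by linarith
  have e1 : p * Real.log (1 + γ1 * δ') / γ1 = p * (Real.log (1 + γ1 * δ') / γ1) := by ring
  have e2 : (1 - p) * Real.log (1 + γ2 * δ') / γ2 = (1 - p) * (Real.log (1 + γ2 * δ') / γ2) := by
    ring
  have l1 := key_le hδ' h1
  have l2 := key_le hδ' h2
  constructor
  · rw [e1, e2]
    have := mul_le_mul_of_nonneg_left l1 hp0.le
    have := mul_le_mul_of_nonneg_left l2 hq.le
    simp only [one_mul, div_one]
    nlinarith
  · intro hne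
    rw [e1, e2]
    simp only [one_mul, div_one]
    rcases eq_or_lt_of_le h1 with g1 | g1
    · have g2 : 1 < γ2 := by
        rcases eq_or_lt_of_le h2 with g2 | g2
        · exact absurd ⟨g1.symm, g2.symm⟩ hne
        · exact g2
      have := mul_lt_mul_of_pos_left (key_lt hδ' g2) hq
      have := mul_le_mul_of_nonneg_left l1 hp0.le
      simp only [← g1, one_mul, div_one] at *
      nlinarith
    · have := mul_lt_mul_of_pos_left (key_lt hδ' g1) hp0
      have := mul_le_mul_of_nonneg_left l2 hq.le
      nlinarith
end

section
/- Let δ' > 3e² be a real (e Euler's number), and let γ1 ≥ 1 and γ2 ≥ 3 be reals. Then log(γ1·δ') + log(γ2·δ') − γ2·(log(γ1·δ') − 1) − 1 < 0. Consequently, for any p > 0, the function γ1 ↦ ẑ(γ1, γ2) = p·[(γ2 − 1)·log(γ1·δ') + (γ1 − 1)·log(γ2·δ')]/(γ1·γ2) is strictly decreasing on [1, ∞), so its maximum over γ1 ∈ [1, B1] (any real B1 ≥ 1) is attained at γ1 = 1. -/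
/-!
Write `a = log δ'`. Since `log (γ1 δ') = log γ1 + a` with `log γ1 ≥ 0`, the factor is at most
`log γ2 + γ2 - 1 - (γ2 - 2) a`. The hypothesis `δ' > 3e²` gives `a > 2 + log 3`, and the
tangent line of `log` at `3` bounds `log γ2` by `log 3 + γ2 / 3 - 1`; together these make the
factor negative once `γ2 ≥ 3`. Up to the positive factor `p / (γ1² γ2)` the factor is the
derivative of `ẑ(·, γ2)`, so `ẑ(·, γ2)` is strictly decreasing on `[1, ∞)`.
-/

open Real Set

lemma two_add_log_three_lt_log {δ : ℝ} (hδ : 3 * exp 1 ^ 2 < δ) : 2 + log 3 < log δ := by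
  have h := log_lt_log (by positivity) hδ
  rwa [log_mul (by norm_num) (by positivity), log_pow, log_exp, Nat.cast_ofNat, mul_one,
    add_comm] at h

lemma log_le_log_three_add {x : ℝ} (hx : 0 < x) : log x ≤ log 3 + x / 3 - 1 := by
  have h := log_le_sub_one_of_pos (div_pos hx three_pos)
  rw [log_div hx.ne' three_ne_zero] at h
  linarith

theorem envelope_factor_neg {δ γ1 γ2 : ℝ} (hδ : 3 * exp 1 ^ 2 < δ) (hγ1 : 1 ≤ γ1)
    (hγ2 : 3 ≤ γ2) :
    log (γ1 * δ) + log (γ2 * δ) - γ2 * (log (γ1 * δ) - 1) - 1 < 0 := by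
  have hδ0 : 0 < δ := lt_trans (by positivity) hδ
  have ha := two_add_log_three_lt_log hδ
  have hγ2_log := log_le_log_three_add (by linarith : 0 < γ2)
  have hγ1_log : 0 ≤ log γ1 := log_nonneg hγ1
  have hlog3 : 0 ≤ log 3 := log_nonneg (by norm_num)
  rw [log_mul (by positivity) hδ0.ne', log_mul (by positivity) hδ0.ne']
  linarith [mul_nonneg (by linarith : (0 : ℝ) ≤ γ2 - 1) hγ1_log,
    mul_pos (by linarith : (0 : ℝ) < γ2 - 2) (by linarith : 0 < log δ - 2 - log 3),
    mul_nonneg hlog3 (by linarith : (0 : ℝ) ≤ γ2 - 3)]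

lemma hasDerivAt_envelope (p q c L : ℝ) {δ x : ℝ} (hδ : δ ≠ 0) (hx : x ≠ 0) (hq : q ≠ 0) :
    HasDerivAt (fun t => p * (c * log (t * δ) + (t - 1) * L) / (t * q))
      (p * (c * (1 - log (x * δ)) + L) / (x ^ 2 * q)) x := by
  have hlog : HasDerivAt (fun t => log (t * δ)) x⁻¹ x := by
    convert (hasDerivAt_mul_const δ).log (mul_ne_zero hx hδ) using 1
    field_simp
  have hnum :
      HasDerivAt (fun t => p * (c * log (t * δ) + (t - 1) * L)) (p * (c * x⁻¹ + L)) x := by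
    simpa using
      ((hlog.const_mul c).add (((hasDerivAt_id' x).sub_const 1).mul_const L)).const_mul p
  have hden : HasDerivAt (fun t => t * q) q x := hasDerivAt_mul_const q
  refine (hnum.div hden (mul_ne_zero hx hq)).congr_deriv ?_
  field_simp
  ring

lemma strictAntiOn_envelope {p q c L δ : ℝ} {D : Set ℝ} (hp : 0 < p) (hq : 0 < q) (hδ : 0 < δ)
    (hD : Convex ℝ D) (hD0 : D ⊆ Ioi 0)
    (hneg : ∀ x ∈ interior D, c * (1 - log (x * δ)) + L < 0) :
    StrictAntiOn (fun t => p * (c * log (t * δ) + (t - 1) * L) / (t * q)) D := by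
  have hderiv (x) (hx : x ∈ D) := hasDerivAt_envelope p q c L hδ.ne' (hD0 hx).out.ne' hq.ne'
  refine strictAntiOn_of_hasDerivWithinAt_neg hD
    (fun x hx => (hderiv x hx).continuousAt.continuousWithinAt)
    (fun x hx => (hderiv x (interior_subset hx)).hasDerivWithinAt) fun x hx => ?_
  have hx0 : 0 < x := hD0 (interior_subset hx)
  exact div_neg_of_neg_of_pos (mul_neg_of_pos_of_neg hp (hneg x hx)) (by positivity)

/-- For `δ' > 3e²` and `γ2 ≥ 3`, the derivative factor
`log (γ1 δ') + log (γ2 δ') − γ2 (log (γ1 δ') − 1) − 1` is negative for every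
`γ1 ≥ 1`; consequently the upper envelope `γ1 ↦ ẑ (γ1, γ2)` is strictly
decreasing on `[1, ∞)` and its maximum over `[1, B1]` is attained at `γ1 = 1`. -/
theorem upper_envelope_decreasing_for_large_gamma2
    (δ' γ2 : ℝ) (hδ' : 3 * Real.exp 1 ^ 2 < δ') (hγ2 : 3 ≤ γ2) :
    (∀ γ1 : ℝ, 1 ≤ γ1 →
      Real.log (γ1 * δ') + Real.log (γ2 * δ') - γ2 * (Real.log (γ1 * δ') - 1) - 1 < 0) ∧
    (∀ p : ℝ, 0 < p →
      StrictAntiOn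
        (fun γ1 : ℝ =>
          p * ((γ2 - 1) * Real.log (γ1 * δ') + (γ1 - 1) * Real.log (γ2 * δ')) / (γ1 * γ2))
        (Set.Ici 1) ∧
      ∀ B1 : ℝ, 1 ≤ B1 → ∀ γ1 : ℝ, 1 ≤ γ1 → γ1 ≤ B1 →
        p * ((γ2 - 1) * Real.log (γ1 * δ') + (γ1 - 1) * Real.log (γ2 * δ')) / (γ1 * γ2) ≤
          p * ((γ2 - 1) * Real.log (1 * δ') + (1 - 1) * Real.log (γ2 * δ')) / (1 * γ2)) := by
  have hfactor (γ1 : ℝ) (hγ1 : 1 ≤ γ1) := envelope_factor_neg hδ' hγ1 hγ2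
  refine ⟨hfactor, fun p hp => ?_⟩
  have hanti : StrictAntiOn
      (fun γ1 : ℝ =>
        p * ((γ2 - 1) * log (γ1 * δ') + (γ1 - 1) * log (γ2 * δ')) / (γ1 * γ2)) (Ici 1) := by
    refine strictAntiOn_envelope hp (by linarith) (lt_trans (by positivity) hδ') (convex_Ici 1)
      (fun x (hx : 1 ≤ x) => show 0 < x by linarith) fun x hx => ?_
    rw [interior_Ici] at hx
    linarith [hfactor x (le_of_lt hx)]
  exact ⟨hanti, fun _ _ γ1 hγ1 _ => hanti.antitoneOn self_mem_Ici hγ1 hγ1⟩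
end

section
/- Let B1 > B2 ≥ 1 be integers, let δ' > 3e² (e Euler's number) and p > 0 be reals. Define, for positive integers γ1, γ2 with g = gcd(γ1, γ2), z⁺(γ1, γ2) = p·[(γ2 − g)·log(γ1·δ') + (γ1 − g)·log(γ2·δ')]/(γ1·γ2). Then for all integers γ1, γ2 with 1 ≤ γ1 ≤ B1 and 1 ≤ γ2 ≤ B2, z⁺(γ1, γ2) ≤ z⁺(B1, 1) = p·(B1 − 1)·log(δ')/B1; that is, the optimal thresholds are γ1* = B1 and γ2* = 1. -/
lemma my_log_le_div_e {x : ℝ} (hx : 0 < x) : Real.log x ≤ x / Real.exp 1 := by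
  have h := Real.log_le_sub_one_of_pos (div_pos hx (Real.exp_pos 1))
  rw [Real.log_div (ne_of_gt hx) (ne_of_gt (Real.exp_pos 1)), Real.log_exp] at h
  linarith

lemma my_key (a b B L c : ℝ) (ha : 2 ≤ a) (hb : 2 ≤ b)
    (h4 : 4 ≤ B ∨ (B = 3 ∧ b = 2 ∧ a ≤ 3))
    (hL : 3 ≤ L) (hc0 : 0 ≤ c) (hc : c ≤ 0.37) :
    B * ((b-1)*(L + c*a) + (a-1)*(L + c*b)) ≤ (B-1) * L * (a*b) := by
  rcases h4 with h4 | ⟨hB3, hb2, ha3⟩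
  · nlinarith [mul_nonneg (sub_nonneg.2 ha) (sub_nonneg.2 hb),
      mul_nonneg (mul_nonneg (by linarith : (0:ℝ) ≤ B) (sub_nonneg.2 ha)) (sub_nonneg.2 hb),
      mul_nonneg (sub_nonneg.2 hL) (mul_nonneg (mul_nonneg (by linarith : (0:ℝ) ≤ a) (by linarith : (0:ℝ) ≤ b)) (by linarith : (0:ℝ) ≤ B - 2)),
      mul_nonneg (sub_nonneg.2 hL) (mul_nonneg (mul_nonneg (by linarith : (0:ℝ) ≤ B) (by linarith : (0:ℝ) ≤ a - 2)) (by linarith : (0:ℝ) ≤ b - 2)),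
      mul_nonneg (sub_nonneg.2 hc) (mul_nonneg (by linarith : (0:ℝ) ≤ B) (by nlinarith : (0:ℝ) ≤ 2*a*b - a - b)),
      mul_nonneg (mul_nonneg (by linarith : (0:ℝ) ≤ a) (by linarith : (0:ℝ) ≤ b)) (by linarith : (0:ℝ) ≤ 1.52*B - 6)]
  · subst hB3 hb2
    nlinarith [mul_nonneg (sub_nonneg.2 hL) (by linarith : (0:ℝ) ≤ a),
      mul_nonneg (sub_nonneg.2 hc) (by linarith : (0:ℝ) ≤ 3*a - 2)]

set_option maxHeartbeats 1000000

/-- High positive correlation, large `δ'`: the aggregate throughput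
`z⁺ (γ1, γ2) = p ((γ2 − g) log (γ1 δ') + (γ1 − g) log (γ2 δ')) / (γ1 γ2)`,
`g = gcd (γ1, γ2)`, is maximized over `1 ≤ γ1 ≤ B1`, `1 ≤ γ2 ≤ B2` (with
`B1 > B2 ≥ 1`) at `(γ1, γ2) = (B1, 1)`, where it equals
`p (B1 − 1) log δ' / B1`. -/
theorem large_delta_optimal_thresholds
    (B1 B2 : ℕ) (hB2 : 1 ≤ B2) (hB : B2 < B1)
    (δ' p : ℝ) (hδ' : 3 * Real.exp 1 ^ 2 < δ') (hp : 0 < p)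
    (z : ℕ → ℕ → ℝ)
    (hz : ∀ γ1 γ2 : ℕ, z γ1 γ2 =
      p * (((γ2 : ℝ) - (Nat.gcd γ1 γ2 : ℝ)) * Real.log ((γ1 : ℝ) * δ') +
            ((γ1 : ℝ) - (Nat.gcd γ1 γ2 : ℝ)) * Real.log ((γ2 : ℝ) * δ'))
        / ((γ1 : ℝ) * γ2)) :
    (∀ γ1 γ2 : ℕ, 1 ≤ γ1 → γ1 ≤ B1 → 1 ≤ γ2 → γ2 ≤ B2 →
      z γ1 γ2 ≤ z B1 1) ∧
    z B1 1 = p * ((B1 : ℝ) - 1) * Real.log δ' / B1 := by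
  have hE : (2.7182818283:ℝ) < Real.exp 1 := Real.exp_one_gt_d9
  have hE2 : Real.exp 1 < 2.72 := by
    have := Real.exp_one_lt_d9; linarith
  have hδ0 : (0:ℝ) < δ' := by nlinarith [Real.exp_pos 1]
  have hδ1 : (1:ℝ) < δ' := by nlinarith
  have hL3 : (3:ℝ) ≤ Real.log δ' := by
    have h1 : Real.log (3 * Real.exp 1 ^ 2) ≤ Real.log δ' :=
      Real.log_le_log (by positivity) hδ'.le
    rw [Real.log_mul (by norm_num) (by positivity), Real.log_pow, Real.log_exp] at h1
    have h3 : (1:ℝ) ≤ Real.log 3 := by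
      rw [← Real.log_exp 1]
      exact Real.log_le_log (Real.exp_pos 1) (by linarith)
    push_cast at h1
    linarith
  have hL0 : (0:ℝ) ≤ Real.log δ' := by linarith
  have hval : z B1 1 = p * ((B1 : ℝ) - 1) * Real.log δ' / B1 := by
    rw [hz, Nat.gcd_one_right]
    push_cast
    rw [one_mul δ']
    ring
  refine ⟨?_, hval⟩
  intro a b ha1 haB hb1 hbB
  have hB1pos : (0:ℝ) < B1 := Nat.cast_pos.2 (by omega)
  have hBa : (a:ℝ) ≤ (B1:ℝ) := by exact_mod_cast haB
  have hBb : (b:ℝ) ≤ (B1:ℝ) := by exact_mod_cast (by omega : b ≤ B1)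
  have ha0 : (0:ℝ) < a := Nat.cast_pos.2 (by omega)
  have hb0 : (0:ℝ) < b := Nat.cast_pos.2 (by omega)
  rw [hz, hval]
  rcases eq_or_lt_of_le hb1 with hb1' | hb2'
  · -- γ2 = 1
    cases hb1'
    rw [Nat.gcd_one_right]
    push_cast
    rw [one_mul δ']
    rw [div_le_div_iff₀ (by nlinarith) hB1pos]
    nlinarith [mul_nonneg (mul_nonneg hp.le hL0) (sub_nonneg.2 hBa)]
  · rcases eq_or_lt_of_le ha1 with ha1' | ha2'
    · -- γ1 = 1
      cases ha1'
      rw [Nat.gcd_one_left]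
      push_cast
      rw [one_mul δ']
      rw [div_le_div_iff₀ (by nlinarith) hB1pos]
      nlinarith [mul_nonneg (mul_nonneg hp.le hL0) (sub_nonneg.2 hBb)]
    · -- 2 ≤ γ1, 2 ≤ γ2
      have ha2 : (2:ℝ) ≤ a := by exact_mod_cast ha2'
      have hb2 : (2:ℝ) ≤ b := by exact_mod_cast hb2'
      have hB13 : 3 ≤ B1 := by omega
      set c : ℝ := (Real.exp 1)⁻¹ with hcdef
      have hcpos : (0:ℝ) < c := inv_pos.2 (Real.exp_pos 1)
      have hc37 : c ≤ 0.37 := by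
        rw [hcdef, show (Real.exp 1)⁻¹ = 1 / Real.exp 1 from (one_div _).symm,
          div_le_iff₀ (Real.exp_pos 1)]
        linarith
      have hg1 : (1:ℝ) ≤ (Nat.gcd a b : ℝ) :=
        Nat.one_le_cast.2 (Nat.gcd_pos_of_pos_left _ (by omega))
      have hla : Real.log ((a:ℝ) * δ') = Real.log a + Real.log δ' :=
        Real.log_mul (ne_of_gt ha0) (ne_of_gt hδ0)
      have hlb : Real.log ((b:ℝ) * δ') = Real.log b + Real.log δ' :=
        Real.log_mul (ne_of_gt hb0) (ne_of_gt hδ0)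
      have haδ : (1:ℝ) ≤ (a:ℝ) * δ' := by
        have := mul_le_mul ha2 hδ1.le zero_le_one (by linarith : (0:ℝ) ≤ (a:ℝ))
        linarith
      have hbδ : (1:ℝ) ≤ (b:ℝ) * δ' := by
        have := mul_le_mul hb2 hδ1.le zero_le_one (by linarith : (0:ℝ) ≤ (b:ℝ))
        linarith
      have hla0 : 0 ≤ Real.log ((a:ℝ) * δ') := Real.log_nonneg haδ
      have hlb0 : 0 ≤ Real.log ((b:ℝ) * δ') := Real.log_nonneg hbδ
      have hlea : Real.log ((a:ℝ) * δ') ≤ Real.log δ' + c * a := by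
        have h := my_log_le_div_e ha0
        rw [div_eq_mul_inv, ← hcdef] at h
        have hcomm : (a:ℝ) * c = c * a := mul_comm _ _
        rw [hla]; linarith
      have hleb : Real.log ((b:ℝ) * δ') ≤ Real.log δ' + c * b := by
        have h := my_log_le_div_e hb0
        rw [div_eq_mul_inv, ← hcdef] at h
        have hcomm : (b:ℝ) * c = c * b := mul_comm _ _
        rw [hlb]; linarith
      have h4 : 4 ≤ (B1:ℝ) ∨ ((B1:ℝ) = 3 ∧ (b:ℝ) = 2 ∧ (a:ℝ) ≤ 3) := by
        rcases le_or_gt 4 B1 with h | h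
        · exact Or.inl (by exact_mod_cast h)
        · have hB1e : B1 = 3 := by omega
          have hbe : b = 2 := by omega
          have hae : a ≤ 3 := by omega
          exact Or.inr ⟨by exact_mod_cast hB1e, by exact_mod_cast hbe,
            by exact_mod_cast hae⟩
      have hkey := my_key a b B1 (Real.log δ') c ha2 hb2 h4 hL3 hcpos.le hc37
      have hM : ((b:ℝ) - (Nat.gcd a b : ℝ)) * Real.log ((a:ℝ) * δ') +
          ((a:ℝ) - (Nat.gcd a b : ℝ)) * Real.log ((b:ℝ) * δ') ≤
          ((b:ℝ)-1)*(Real.log δ' + c*a) + ((a:ℝ)-1)*(Real.log δ' + c*b) := by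
        linarith [mul_nonneg (by linarith : (0:ℝ) ≤ (Nat.gcd a b : ℝ) - 1) hla0,
          mul_nonneg (by linarith : (0:ℝ) ≤ (Nat.gcd a b : ℝ) - 1) hlb0,
          mul_nonneg (by linarith : (0:ℝ) ≤ (b:ℝ) - 1) (sub_nonneg.2 hlea),
          mul_nonneg (by linarith : (0:ℝ) ≤ (a:ℝ) - 1) (sub_nonneg.2 hleb)]
      rw [div_le_div_iff₀ (mul_pos ha0 hb0) hB1pos]
      linarith [mul_nonneg (mul_nonneg hp.le hB1pos.le) (sub_nonneg.2 hM),
        mul_le_mul_of_nonneg_left hkey hp.le]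
end
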